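/- Let ε ∈ ℝ and let (x,y,x̃,ỹ) ∈ ℝ⁴ satisfy x̃ − x = ε(2x̃x − 12ỹy) and ỹ − y = −ε(3x̃y + 3xỹ + 4ỹy). Define D(x,y) = 1 − 10ε²(x² + 4y²) + ε⁴(9x⁴ + 272x³y − 352xy³ + 696y⁴) and assume D(x,y) ≠ 0 and D(x̃,ỹ) ≠ 0. Then ỹ(2x̃ + 3ỹ)(x̃ − ỹ)²/D(x̃,ỹ) = y(2x + 3y)(x − y)²/D(x,y), i.e. H(ε) = y(2x + 3y)(x − y)²/D(x,y) is a conserved quantity. -/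
import Mathlib


/-- The denominator of the conserved quantity for the octahedral reduced Nahm
system. -/
noncomputable def nahmOctD (ε x y : ℝ) : ℝ :=
  1 - 10 * ε ^ 2 * (x ^ 2 + 4 * y ^ 2)
    + ε ^ 4 * (9 * x ^ 4 + 272 * x ^ 3 * y - 352 * x * y ^ 3 + 696 * y ^ 4)

/-- Conserved quantity of the Hirota–Kimura discretization of the reduced Nahm
equations with octahedral symmetry `ẋ = 2x² - 12y²`, `ẏ = -6xy - 4y²`. -/
theorem nahm_octahedral_kahan_integral (ε x y xt yt : ℝ)
    (h1 : xt - x = ε * (2 * xt * x - 12 * yt * y))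
    (h2 : yt - y = -(ε * (3 * xt * y + 3 * x * yt + 4 * yt * y)))
    (hd : nahmOctD ε x y ≠ 0)
    (hdt : nahmOctD ε xt yt ≠ 0) :
    yt * (2 * xt + 3 * yt) * (xt - yt) ^ 2 / nahmOctD ε xt yt
      = y * (2 * x + 3 * y) * (x - y) ^ 2 / nahmOctD ε x y := by
  rw [div_eq_div_iff hdt hd]
  simp only [nahmOctD]
  linear_combination ((-11/2)*yt^3 + (-11/8)*xt*yt^2 + (11/4)*xt^2*yt + (7/2)*y*yt^2 + (7/8)*y*xt*yt + (-3/4)*y*xt^2 + (7/2)*y^2*yt + (-1/2)*y^2*xt + (-11/2)*y^3 + (-1/2)*x*yt^2 + x*xt*yt + (7/8)*x*y*yt + x*y*xt + (-11/8)*x*y^2 + (-3/4)*x^2*yt + (11/4)*x^2*y + (45/4)*ε*y*yt^3 - 2*ε*y*xt*yt^2 + (9/8)*ε*y*xt^2*yt + (9/4)*ε*y*xt^3 - 19*ε*y^2*xt*yt + (9/4)*ε*y^2*xt^2 + (-45/4)*ε*y^3*yt + (31/2)*ε*y^3*xt + (-31/2)*ε*x*yt^3 + (-31/8)*ε*x*xt*yt^2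 + (31/4)*ε*x*xt^2*yt + 19*ε*x*y*yt^2 + (-9/2)*ε*x*y*xt^2 + 2*ε*x*y^2*yt + (31/8)*ε*x*y^2*xt + (-9/4)*ε*x^2*yt^2 + (9/2)*ε*x^2*xt*yt + (-9/8)*ε*x^2*y*yt + (-31/4)*ε*x^2*y*xt + (-9/4)*ε*x^3*yt + 157*ε^2*y^2*yt^3 + (489/4)*ε^2*y^2*xt*yt^2 - 5*ε^2*y^2*xt^2*yt + (-9/4)*ε^2*y^2*xt^3 + 157*ε^2*y^3*yt^2 + (501/4)*ε^2*y^3*xt*yt + 9*ε^2*y^3*xt^2 + (501/4)*ε^2*x*y*yt^3 + 14*ε^2*x*y*xt*yt^2 + (9/2)*ε^2*x*y*xt^3 + (489/4)*ε^2*x*y^2*yt^2 + 14*ε^2*x*y^2*xt*yt + (9/4)*ε^2*x*y^2*xt^2 + 9*ε^2*x^2*yt^3 + (9/4)*ε^2*x^2*xt*yt^2 + (-9/2)*ε^2*x^2*xt^2*yt - 5*ε^2*x^2*y*yt^2 + (-9/2)*ε^2*x^2*y*xt^2 + (-9/4)*ε^2*x^3*yt^2 + (9/2)*ε^2*x^3*xt*yt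 - 254*ε^3*y^3*xt*yt^2 + (-465/2)*ε^3*y^3*xt^2*yt - 18*ε^3*y^3*xt^3 + 254*ε^3*x*y^2*yt^3 - 82*ε^3*x*y^2*xt^2*yt + (-9/2)*ε^3*x*y^2*xt^3 + (465/2)*ε^3*x^2*y*yt^3 + 82*ε^3*x^2*y*xt*yt^2 + 9*ε^3*x^2*y*xt^3 + 18*ε^3*x^3*yt^3 + (9/2)*ε^3*x^3*xt*yt^2 - 9*ε^3*x^3*xt^2*yt) * h1 + (3*yt^3 + (3/2)*xt*yt^2 + (3/8)*xt^2*yt + (-3/4)*xt^3 + 3*y*yt^2 - 2*y*xt*yt + (-1/2)*y*xt^2 + 3*y^2*yt + (-11/2)*y^2*xt + 3*y^3 + (-11/2)*x*yt^2 + (-7/8)*x*xt*yt + (7/4)*x*xt^2 - 2*x*y*yt + (-7/8)*x*y*xt + (3/2)*x*y^2 + (-1/2)*x^2*yt + (7/4)*x^2*xt + (3/8)*x^2*y + (-3/4)*x^3 + 54*ε*y*yt^3 + (-39/4)*ε*y*xt*yt^2 - 37*ε*y*xt^2*yt + (3/4)*ε*y*xt^3 + (-85/4)*ε*y^2*xt*yt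 - ε*y^2*xt^2 - 54*ε*y^3*yt + 9*ε*y^3*xt - 9*ε*x*yt^3 + (85/4)*ε*x*y*yt^2 + (39/4)*ε*x*y^2*yt + ε*x^2*yt^2 + 37*ε*x^2*y*yt + (-3/4)*ε*x^3*yt - 471*ε^2*y^2*yt^3 - 96*ε^2*y^2*xt*yt^2 + (163/2)*ε^2*y^2*xt^2*yt + 6*ε^2*y^2*xt^3 - 471*ε^2*y^3*yt^2 + 60*ε^2*y^3*xt*yt - 3*ε^2*y^3*xt^2 + 60*ε^2*x*y*yt^3 - 96*ε^2*x*y^2*yt^2 - 3*ε^2*x^2*yt^3 + (163/2)*ε^2*x^2*y*yt^2 + 6*ε^2*x^3*yt^2 + 330*ε^3*y^3*xt*yt^2 + 276*ε^3*y^3*xt^2*yt - 9*ε^3*y^3*xt^3 - 330*ε^3*x*y^2*yt^3 - 276*ε^3*x^2*y*yt^3 + 9*ε^3*x^3*yt^3) * h2
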